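/- Let $(X, Y, Z)$ be jointly distributed random variables with finite entropies, and define $S_F^* = \arg\min_{S = f(Y)} H(X \mid S)$ and $S_S^* = \arg\min_{S = f(Y)} H(X \mid Z, S)$, minimizing over measurable functions $f$ of $Y$. Then $I(X; S_F^*) \ge I(X; S_S^*)$ and $I(X; Z \mid S_S^*) \ge I(X; Z \mid S_F^*)$. -/
import Mathlib


/-- Probability `P(X = a)` for a random variable `X` on a finite probability space
with probability mass function `P`. -/
def pr {Ω α : Type*} [Fintype Ω] [DecidableEq α] (P : Ω → ℝ) (X : Ω → α) (a : α) : ℝ :=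
  ∑ ω ∈ Finset.univ.filter (fun ω => X ω = a), P ω

/-- Shannon entropy `H(X)` (natural logarithm, with the convention `0 log 0 = 0`). -/
noncomputable def entropy {Ω α : Type*} [Fintype Ω] [Fintype α] [DecidableEq α]
    (P : Ω → ℝ) (X : Ω → α) : ℝ :=
  -∑ a : α, pr P X a * Real.log (pr P X a)

/-- Conditional Shannon entropy `H(X ∣ S)`. -/
noncomputable def condEntropy {Ω α β : Type*} [Fintype Ω] [Fintype α] [Fintype β]
    [DecidableEq α] [DecidableEq β] (P : Ω → ℝ) (X : Ω → α) (S : Ω → β) : ℝ :=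
  -∑ a : α, ∑ s : β,
    pr P (fun ω => (X ω, S ω)) (a, s) *
      Real.log (pr P (fun ω => (X ω, S ω)) (a, s) / pr P S s)

/-- Mutual information `I(X; S) = H(X) - H(X ∣ S)`. -/
noncomputable def mutualInfo {Ω α β : Type*} [Fintype Ω] [Fintype α] [Fintype β]
    [DecidableEq α] [DecidableEq β] (P : Ω → ℝ) (X : Ω → α) (S : Ω → β) : ℝ :=
  entropy P X - condEntropy P X S

/-- Conditional mutual information `I(X; Z ∣ S) = H(X ∣ S) - H(X ∣ Z, S)`. -/
noncomputable def condMutualInfo {Ω α β γ : Type*} [Fintype Ω] [Fintype α] [Fintype β]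
    [Fintype γ] [DecidableEq α] [DecidableEq β] [DecidableEq γ]
    (P : Ω → ℝ) (X : Ω → α) (Z : Ω → γ) (S : Ω → β) : ℝ :=
  condEntropy P X S - condEntropy P X (fun ω => (Z ω, S ω))

/-- Let `(X, Y, Z)` be jointly distributed and let
`S_F^* = f_F(Y)` minimize `H(X ∣ S)` and `S_S^* = f_S(Y)` minimize `H(X ∣ Z, S)`
over all summaries `S = f(Y)`. Then `I(X; S_F^*) ≥ I(X; S_S^*)` and
`I(X; Z ∣ S_S^*) ≥ I(X; Z ∣ S_F^*)`. -/
theorem optimal_summary_comparison {Ω 𝒳 𝒴 𝒵 SF SS : Type}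
    [Fintype Ω] [Fintype 𝒳] [Fintype 𝒴] [Fintype 𝒵] [Fintype SF] [Fintype SS]
    [DecidableEq 𝒳] [DecidableEq 𝒴] [DecidableEq 𝒵] [DecidableEq SF] [DecidableEq SS]
    (P : Ω → ℝ) (hP0 : ∀ ω, 0 ≤ P ω) (hP1 : ∑ ω : Ω, P ω = 1)
    (X : Ω → 𝒳) (Y : Ω → 𝒴) (Z : Ω → 𝒵) (fF : 𝒴 → SF) (fS : 𝒴 → SS)
    (hF : ∀ (T : Type) [Fintype T] [DecidableEq T] (g : 𝒴 → T),
      condEntropy P X (fun ω => fF (Y ω)) ≤ condEntropy P X (fun ω => g (Y ω)))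
    (hS : ∀ (T : Type) [Fintype T] [DecidableEq T] (g : 𝒴 → T),
      condEntropy P X (fun ω => (Z ω, fS (Y ω))) ≤
        condEntropy P X (fun ω => (Z ω, g (Y ω)))) :
    mutualInfo P X (fun ω => fS (Y ω)) ≤ mutualInfo P X (fun ω => fF (Y ω)) ∧
    condMutualInfo P X Z (fun ω => fF (Y ω)) ≤ condMutualInfo P X Z (fun ω => fS (Y ω)) := by
  have h1 := hF SS fS
  have h2 := hS SF fF
  constructor
  · unfold mutualInfo; linarith
  · unfold condMutualInfo; linarith
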